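/- arXiv:2605.20988 — 2 statements merged into one kernel-verified Lean document; each statement's English description precedes it below -/
import Mathlib

section
/- Let T, d ≥ 1, let X ∈ ℝ^{T×d}, let u ∈ ℝ^d, and let p ∈ ℝ^T be a probability vector. Set A = diag(p) − p pᵀ ∈ ℝ^{T×T}. Then ‖Xᵀ A X u‖₂ ≤ 2 ‖X u‖_∞ · max_{1≤t≤T} ‖Xₜ‖₂, where Xₜ denotes the t-th row of X. -/
open Matrix

/-- Bound on the softmax-Jacobian quadratic form (Deora et al.): for a probability vector
`p ∈ ℝᵀ`, letting `A = diag(p) - p pᵀ` be the softmax Jacobian,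
`‖Xᵀ A X u‖₂ ≤ 2 ‖X u‖_∞ · max_t ‖X_t‖₂`, where `X_t` is the `t`-th row of `X`. -/
theorem softmax_jacobian_quadratic_bound (T d : ℕ) (hT : 1 ≤ T) (hd : 1 ≤ d)
    (X : Matrix (Fin T) (Fin d) ℝ) (u : Fin d → ℝ) (p : Fin T → ℝ)
    (hp0 : ∀ t, 0 ≤ p t) (hp1 : ∑ t, p t = 1) :
    Real.sqrt (∑ j,
        ((Xᵀ * (Matrix.diagonal p - Matrix.vecMulVec p p) * X) *ᵥ u) j ^ 2)
      ≤ 2 * (⨆ t : Fin T, |(X *ᵥ u) t|)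
        * (⨆ t : Fin T, Real.sqrt (∑ j, X t j ^ 2)) := by
  haveI : NeZero T := ⟨by omega⟩
  set v : Fin T → ℝ := X *ᵥ u with hv
  set S : ℝ := ∑ t, p t * v t with hS
  set c : Fin T → ℝ := fun t => p t * (v t - S) with hc
  set M : ℝ := ⨆ t : Fin T, |v t| with hM
  set R : ℝ := ⨆ t : Fin T, Real.sqrt (∑ j, X t j ^ 2) with hR
  have hMb : BddAbove (Set.range fun t : Fin T => |v t|) := Set.Finite.bddAbove (Set.finite_range _)
  have hRb : BddAbove (Set.range fun t : Fin T => Real.sqrt (∑ j, X t j ^ 2)) :=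
    Set.Finite.bddAbove (Set.finite_range _)
  have hMle : ∀ t, |v t| ≤ M := fun t => le_ciSup hMb t
  have hRle : ∀ t, Real.sqrt (∑ j, X t j ^ 2) ≤ R := fun t => le_ciSup hRb t
  have hM0 : 0 ≤ M := le_trans (abs_nonneg _) (hMle ⟨0, by omega⟩)
  have hR0 : 0 ≤ R := le_trans (Real.sqrt_nonneg _) (hRle ⟨0, by omega⟩)
  have hSle : |S| ≤ M := by
    calc |S| ≤ ∑ t, |p t * v t| := Finset.abs_sum_le_sum_abs _ _
    _ ≤ ∑ t, p t * M := by
      refine Finset.sum_le_sum fun t _ => ?_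
      rw [abs_mul, abs_of_nonneg (hp0 t)]
      exact mul_le_mul_of_nonneg_left (hMle t) (hp0 t)
    _ = M := by rw [← Finset.sum_mul, hp1, one_mul]
  have hcle : ∀ t, |c t| ≤ p t * (2 * M) := by
    intro t
    rw [hc, abs_mul, abs_of_nonneg (hp0 t)]
    refine mul_le_mul_of_nonneg_left ?_ (hp0 t)
    calc |v t - S| ≤ |v t| + |S| := abs_sub _ _
    _ ≤ M + M := add_le_add (hMle t) hSle
    _ = 2 * M := by ring
  -- entrywise formula
  have hentry : ∀ j, ((Xᵀ * (Matrix.diagonal p - Matrix.vecMulVec p p) * X) *ᵥ u) j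
      = ∑ t, c t * X t j := by
    intro j
    have h1 : (Xᵀ * (Matrix.diagonal p - Matrix.vecMulVec p p) * X) *ᵥ u
        = Xᵀ *ᵥ ((Matrix.diagonal p - Matrix.vecMulVec p p) *ᵥ v) := by
      rw [hv, Matrix.mulVec_mulVec, Matrix.mulVec_mulVec, Matrix.mul_assoc]
    rw [h1]
    have hw : ∀ t, ((Matrix.diagonal p - Matrix.vecMulVec p p) *ᵥ v) t = c t := by
      intro t
      rw [Matrix.sub_mulVec]
      simp only [Pi.sub_apply, Matrix.mulVec_diagonal]
      have : (Matrix.vecMulVec p p *ᵥ v) t = p t * S := by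
        simp only [Matrix.mulVec, dotProduct, Matrix.vecMulVec_apply, hS,
          Finset.mul_sum, mul_assoc]
      rw [this, hc]; ring
    simp only [Matrix.mulVec, dotProduct, Matrix.transpose_apply]
    refine Finset.sum_congr rfl fun t _ => ?_
    have : (∑ x, (Matrix.diagonal p - Matrix.vecMulVec p p) t x * v x)
        = ((Matrix.diagonal p - Matrix.vecMulVec p p) *ᵥ v) t := rfl
    rw [this, hw t, mul_comm]
  -- triangle inequality via EuclideanSpace
  set r : Fin T → EuclideanSpace ℝ (Fin d) := fun t => WithLp.toLp 2 (fun j => X t j) with hr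
  have hnorm : ∀ t, ‖r t‖ = Real.sqrt (∑ j, X t j ^ 2) := by
    intro t
    rw [EuclideanSpace.norm_eq]
    congr 1
    exact Finset.sum_congr rfl fun j _ => by rw [Real.norm_eq_abs, sq_abs]
  have hsum : Real.sqrt (∑ j, (∑ t, c t * X t j) ^ 2) = ‖∑ t, c t • r t‖ := by
    rw [EuclideanSpace.norm_eq]
    congr 1
    refine Finset.sum_congr rfl fun j _ => ?_
    have : (∑ t, c t • r t) j = ∑ t, c t * X t j := by
      rw [WithLp.ofLp_sum, Finset.sum_apply]
      rfl
    rw [this, Real.norm_eq_abs, sq_abs]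
  calc Real.sqrt (∑ j,
        ((Xᵀ * (Matrix.diagonal p - Matrix.vecMulVec p p) * X) *ᵥ u) j ^ 2)
      = ‖∑ t, c t • r t‖ := by
        rw [← hsum]; congr 1; exact Finset.sum_congr rfl fun j _ => by rw [hentry j]
    _ ≤ ∑ t, ‖c t • r t‖ := norm_sum_le _ _
    _ = ∑ t, |c t| * Real.sqrt (∑ j, X t j ^ 2) := by
        refine Finset.sum_congr rfl fun t _ => ?_
        rw [norm_smul, Real.norm_eq_abs, hnorm t]
    _ ≤ ∑ t, (p t * (2 * M)) * R := by
        refine Finset.sum_le_sum fun t _ => mul_le_mul (hcle t) (hRle t) (Real.sqrt_nonneg _)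
          (mul_nonneg (hp0 t) (by positivity : (0:ℝ) ≤ 2 * M))
    _ = 2 * M * R := by
        rw [← Finset.sum_mul]
        have : ∑ t, p t * (2 * M) = 2 * M := by rw [← Finset.sum_mul, hp1, one_mul]
        rw [this]
end

section
/- Let N ≥ 1 and let p, q ∈ ℝ^N be probability vectors. Set J(p) = diag(p) − p pᵀ. Then for every t ∈ {1,…,N}, ‖(J(q) − J(p)) e_t‖₁ ≤ 3 ‖q − p‖₁, where e_t is the t-th standard basis vector; equivalently (by symmetry of J(q) − J(p)), every row and every column of J(q) − J(p) has ℓ¹-norm at most 3 ‖q − p‖₁. -/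
open Matrix

/-- The Jacobian of the softmax map at a point with softmax output `p`. -/
def softmaxJacobian {N : ℕ} (p : Fin N → ℝ) : Matrix (Fin N) (Fin N) ℝ :=
  Matrix.diagonal p - Matrix.vecMulVec p p

lemma softmaxJacobian_entry {N : ℕ} (p q : Fin N → ℝ) (i t : Fin N) :
    (softmaxJacobian q - softmaxJacobian p) i t
      = (if i = t then q i - p i else 0) - ((q i - p i) * q t + p i * (q t - p t)) := by
  simp only [softmaxJacobian, Matrix.sub_apply, Matrix.diagonal_apply, Matrix.vecMulVec_apply]
  split <;> ring

lemma softmax_col_bound (N : ℕ) (p q : Fin N → ℝ)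
    (hp0 : ∀ i, 0 ≤ p i) (hp1 : ∑ i, p i = 1)
    (hq0 : ∀ i, 0 ≤ q i) (hq1 : ∑ i, q i = 1) (t : Fin N) :
    ∑ i, |(softmaxJacobian q - softmaxJacobian p) i t| ≤ 3 * ∑ i, |q i - p i| := by
  set S := ∑ i, |q i - p i| with hS
  have hqt1 : q t ≤ 1 := by
    rw [← hq1]
    exact Finset.single_le_sum (fun i _ => hq0 i) (Finset.mem_univ t)
  have htS : |q t - p t| ≤ S :=
    Finset.single_le_sum (f := fun i => |q i - p i|)
      (fun i _ => abs_nonneg _) (Finset.mem_univ t)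
  have hbound : ∀ i : Fin N, |(softmaxJacobian q - softmaxJacobian p) i t|
      ≤ (if i = t then |q t - p t| else 0) + (|q i - p i| * q t + p i * |q t - p t|) := by
    intro i
    rw [softmaxJacobian_entry]
    calc |(if i = t then q i - p i else 0) - ((q i - p i) * q t + p i * (q t - p t))|
        ≤ |if i = t then q i - p i else 0| + |(q i - p i) * q t + p i * (q t - p t)| :=
          abs_sub _ _
      _ ≤ (if i = t then |q t - p t| else 0) + (|q i - p i| * q t + p i * |q t - p t|) := by
          gcongr
          · split
            · next h => rw [h]
            · simp
          · calc |(q i - p i) * q t + p i * (q t - p t)|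
                ≤ |(q i - p i) * q t| + |p i * (q t - p t)| := abs_add_le _ _
              _ = |q i - p i| * q t + p i * |q t - p t| := by
                  rw [abs_mul, abs_mul, abs_of_nonneg (hq0 t), abs_of_nonneg (hp0 i)]
  calc ∑ i, |(softmaxJacobian q - softmaxJacobian p) i t|
      ≤ ∑ i, ((if i = t then |q t - p t| else 0) + (|q i - p i| * q t + p i * |q t - p t|)) :=
        Finset.sum_le_sum fun i _ => hbound i
    _ = |q t - p t| + (S * q t + 1 * |q t - p t|) := by
        rw [Finset.sum_add_distrib, Finset.sum_ite_eq' Finset.univ t,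
          Finset.sum_add_distrib, ← Finset.sum_mul, ← Finset.sum_mul, hp1]
        simp [hS]
    _ ≤ S + (S * 1 + 1 * S) := by
        have hS0 : 0 ≤ S := Finset.sum_nonneg fun i _ => abs_nonneg _
        gcongr
    _ = 3 * S := by ring

/-- Perturbation bound for the softmax Jacobian: for probability vectors `p, q ∈ ℝᴺ`,
every column (and, by symmetry, every row) of `J(q) - J(p)` has `ℓ¹`-norm at most
`3 ‖q - p‖₁`, where `J(p) = diag(p) - p pᵀ`. -/
theorem softmax_jacobian_perturbation (N : ℕ) (hN : 1 ≤ N) (p q : Fin N → ℝ)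
    (hp0 : ∀ i, 0 ≤ p i) (hp1 : ∑ i, p i = 1)
    (hq0 : ∀ i, 0 ≤ q i) (hq1 : ∑ i, q i = 1) :
    (∀ t : Fin N,
      ∑ i, |(softmaxJacobian q - softmaxJacobian p) i t| ≤ 3 * ∑ i, |q i - p i|) ∧
    (∀ t : Fin N,
      ∑ j, |(softmaxJacobian q - softmaxJacobian p) t j| ≤ 3 * ∑ i, |q i - p i|) := by
  have hsymm : ∀ i j : Fin N, (softmaxJacobian q - softmaxJacobian p) i j
      = (softmaxJacobian q - softmaxJacobian p) j i := by
    intro i j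
    rw [softmaxJacobian_entry, softmaxJacobian_entry]
    by_cases h : i = j
    · subst h; ring
    · rw [if_neg h, if_neg (Ne.symm h)]; ring
  refine ⟨softmax_col_bound N p q hp0 hp1 hq0 hq1, fun t => ?_⟩
  calc ∑ j, |(softmaxJacobian q - softmaxJacobian p) t j|
      = ∑ j, |(softmaxJacobian q - softmaxJacobian p) j t| := by
        exact Finset.sum_congr rfl fun j _ => by rw [hsymm]
    _ ≤ 3 * ∑ i, |q i - p i| := softmax_col_bound N p q hp0 hp1 hq0 hq1 t
end
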